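/- Acyclicity preservation: if P is an acyclic solos term (satisfying AC1–AC5) and P reduces to Q by a solos reduction step, then Q is also an acyclic solos term. -/
import Mathlib


/-- Communication protocols carried by object occurrences: Send and Receive. -/
inductive Proto : Type
  | S : Proto
  | R : Proto
deriving DecidableEq

/-- A (protocol-decorated) triadic solo: a polarity (`inp = true` for input),
a subject name and three object names each decorated with a protocol. -/
structure Solo where
  inp : Bool
  subj : ℕ
  objs : Fin 3 → ℕ × Proto
deriving DecidableEq

/-- A solos term in canonical form: a finite set of restricted (bound) names
together with a multiset of solos in parallel. -/
structure CTerm where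
  bound : Finset ℕ
  solos : Multiset Solo

/-- `x` has an object occurrence in `s`. -/
def Solo.objOcc (s : Solo) (x : ℕ) : Prop := ∃ i, (s.objs i).1 = x

/-- `x` has an `R`-occurrence in `s` (written `s ◁ x`). -/
def Solo.hasR (s : Solo) (x : ℕ) : Prop := ∃ i, s.objs i = (x, Proto.R)

/-- `x` has an `S`-occurrence in `s`. -/
def Solo.hasS (s : Solo) (x : ℕ) : Prop := ∃ i, s.objs i = (x, Proto.S)

/-- `s ◁ t` : the subject of `t` has an `R`-occurrence in `s`. -/
def Solo.ltS (s t : Solo) : Prop := s.hasR t.subj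

/-- Dual solos: same subject, opposite polarities. -/
def Dual (s t : Solo) : Prop := s.subj = t.subj ∧ s.inp ≠ t.inp

/-- `s` is a root of `P`: no solo `t` of `P` satisfies `t ◁ s`. -/
def CTerm.IsRoot (P : CTerm) (s : Solo) : Prop := ∀ t ∈ P.solos, ¬ t.ltS s

/-- The relation `◁` restricted to the solos of `P`. -/
def CTerm.lt (P : CTerm) (s t : Solo) : Prop :=
  s ∈ P.solos ∧ t ∈ P.solos ∧ s.ltS t

/-- The number of `R`-occurrences of the name `x` in `P`. -/
def CTerm.Rocc (P : CTerm) (x : ℕ) : ℕ :=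
  (P.solos.map
    (fun s => (Finset.univ.filter (fun i => s.objs i = (x, Proto.R))).card)).sum

/-- (AC1): each name has at most one `R`-occurrence. -/
def AC1 (P : CTerm) : Prop := ∀ x : ℕ, P.Rocc x ≤ 1

/-- (AC2): two dual solos are both roots. -/
def AC2 (P : CTerm) : Prop :=
  ∀ s ∈ P.solos, ∀ t ∈ P.solos, Dual s t → P.IsRoot s ∧ P.IsRoot t

/-- (AC3): `s ◁ x` and `x` occurring as object in `t` implies `s ◁* t`. -/
def AC3 (P : CTerm) : Prop :=
  ∀ s ∈ P.solos, ∀ t ∈ P.solos, ∀ x : ℕ,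
    s.hasR x → t.objOcc x → Relation.ReflTransGen P.lt s t

/-- (AC4): a solo with both an `S`- and an `R`-occurrence of a name is an input. -/
def AC4 (P : CTerm) : Prop :=
  ∀ s ∈ P.solos, ∀ x : ℕ, s.hasS x → s.hasR x → s.inp = true

/-- (AC5): no free name has an `R`-occurrence. -/
def AC5 (P : CTerm) : Prop :=
  ∀ x : ℕ, x ∉ P.bound → ∀ s ∈ P.solos, ¬ s.hasR x

/-- Acyclic solos terms: conditions (AC1)–(AC5). -/
def Acyclic (P : CTerm) : Prop := AC1 P ∧ AC2 P ∧ AC3 P ∧ AC4 P ∧ AC5 P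

/-- Applying a name substitution to a solo (protocols are preserved). -/
def applySub (σ : ℕ → ℕ) (s : Solo) : Solo :=
  ⟨s.inp, σ s.subj, fun i => (σ (s.objs i).1, (s.objs i).2)⟩

/-- `MguData σ s0 t0 P` : `σ` is a most general unifier of the objects of the
dual solos `s0` and `t0`, modifying only bound names of `P`. -/
def MguData (σ : ℕ → ℕ) (s0 t0 : Solo) (P : CTerm) : Prop :=
  (∀ i, σ (s0.objs i).1 = σ (t0.objs i).1) ∧
  (∀ w, σ w ≠ w → w ∈ P.bound) ∧
  (∀ w, σ (σ w) = σ w) ∧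
  (∀ τ : ℕ → ℕ, (∀ i, τ (s0.objs i).1 = τ (t0.objs i).1) → ∀ w, τ (σ w) = τ w)

/-- One reduction step of the solos calculus in canonical form: two dual solos
`s0` and `t0` of `P` are erased and a most general unifier of their objects,
modifying only bound names, is applied to the remaining solos (the residues). -/
def Reduces (P Q : CTerm) : Prop :=
  ∃ (s0 t0 : Solo) (σ : ℕ → ℕ),
    s0 ∈ P.solos ∧ t0 ∈ P.solos.erase s0 ∧ Dual s0 t0 ∧
    MguData σ s0 t0 P ∧
    Q.solos = ((P.solos.erase s0).erase t0).map (applySub σ) ∧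
    Q.bound = P.bound.filter (fun w => σ w = w)

namespace Stmt13Aux

/-- Generating relation of the unification equations of `s0`,`t0`. -/
def Gen (s0 t0 : Solo) (a b : ℕ) : Prop := ∃ i, a = (s0.objs i).1 ∧ b = (t0.objs i).1

/-- Equivalence generated by the unification equations. -/
def E (s0 t0 : Solo) : ℕ → ℕ → Prop := Relation.EqvGen (Gen s0 t0)

/-- `x` occurs as an object of `s0` or `t0`. -/
def Occ (s0 t0 : Solo) (x : ℕ) : Prop := s0.objOcc x ∨ t0.objOcc x

lemma E_occ {s0 t0 : Solo} {a b : ℕ} (h : E s0 t0 a b) :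
    a = b ∨ (Occ s0 t0 a ∧ Occ s0 t0 b) := by
  induction h with
  | rel a b hab =>
      obtain ⟨i, ha, hb⟩ := hab
      exact Or.inr ⟨Or.inl ⟨i, ha.symm⟩, Or.inr ⟨i, hb.symm⟩⟩
  | refl a => exact Or.inl rfl
  | symm a b _ ih => rcases ih with h | ⟨h1, h2⟩
                     · exact Or.inl h.symm
                     · exact Or.inr ⟨h2, h1⟩
  | trans a b c _ _ ih1 ih2 =>
      rcases ih1 with h | ⟨h1, h2⟩
      · rcases ih2 with h' | ⟨h1', h2'⟩
        · exact Or.inl (h.trans h')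
        · exact Or.inr ⟨h ▸ h1', h2'⟩
      · rcases ih2 with h' | ⟨h1', h2'⟩
        · exact Or.inr ⟨h1, h' ▸ h2⟩
        · exact Or.inr ⟨h1, h2'⟩

/-- The canonical unifier: send each name to the least element of its class. -/
noncomputable def tau (s0 t0 : Solo) (z : ℕ) : ℕ := sInf {y | E s0 t0 z y}

lemma tau_rel (s0 t0 : Solo) (z : ℕ) : E s0 t0 z (tau s0 t0 z) :=
  Nat.sInf_mem ⟨z, Relation.EqvGen.refl z⟩

lemma tau_eq_of_E {s0 t0 : Solo} {a b : ℕ} (h : E s0 t0 a b) :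
    tau s0 t0 a = tau s0 t0 b := by
  unfold tau
  congr 1
  ext y
  exact ⟨fun hy => Relation.EqvGen.trans _ _ _ (Relation.EqvGen.symm _ _ h) hy,
         fun hy => Relation.EqvGen.trans _ _ _ h hy⟩

lemma tau_unifies (s0 t0 : Solo) :
    ∀ i, tau s0 t0 (s0.objs i).1 = tau s0 t0 (t0.objs i).1 := fun i =>
  tau_eq_of_E (Relation.EqvGen.rel _ _ ⟨i, rfl, rfl⟩)

/-- Names moved by the mgu occur (together with their image) in `s0` or `t0`. -/
lemma sigma_occ {σ : ℕ → ℕ} {s0 t0 : Solo} {P : CTerm} (hm : MguData σ s0 t0 P)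
    {z : ℕ} (hz : σ z ≠ z) : Occ s0 t0 z ∧ Occ s0 t0 (σ z) := by
  have htz : tau s0 t0 (σ z) = tau s0 t0 z := hm.2.2.2 _ (tau_unifies s0 t0) z
  have h1 : E s0 t0 (σ z) z := by
    have h2 := tau_rel s0 t0 (σ z)
    have h3 := tau_rel s0 t0 z
    rw [htz] at h2
    exact Relation.EqvGen.trans _ _ _ h2 (Relation.EqvGen.symm _ _ h3)
  rcases E_occ h1 with h | ⟨h1, h2⟩
  · exact absurd h hz
  · exact ⟨h2, h1⟩

lemma hasR_filter_pos {s : Solo} {x : ℕ} (h : s.hasR x) :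
    1 ≤ (Finset.univ.filter (fun i => s.objs i = (x, Proto.R))).card := by
  obtain ⟨i, hi⟩ := h
  have : i ∈ Finset.univ.filter (fun i => s.objs i = (x, Proto.R)) := by
    simp [hi]
  exact Finset.card_pos.mpr ⟨i, this⟩

/-- Two copies contributing an `R`-occurrence of `x` contradict AC1. -/
lemma two_copies {P : CTerm} {a b : Solo} {x : ℕ}
    (hab : a ::ₘ (b ::ₘ 0) ≤ P.solos) (ha : a.hasR x) (hb : b.hasR x)
    (h1 : AC1 P) : False := by
  obtain ⟨D, hD⟩ := Multiset.le_iff_exists_add.mp hab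
  have h2 : 2 ≤ P.Rocc x := by
    unfold CTerm.Rocc
    rw [hD]
    simp only [Multiset.map_add, Multiset.sum_add, Multiset.map_cons,
      Multiset.sum_cons, Multiset.map_zero, Multiset.sum_zero]
    have := hasR_filter_pos ha
    have := hasR_filter_pos hb
    omega
  have := h1 x
  omega

end Stmt13Aux

/-- Acyclicity preservation: reducts of acyclic solos terms are
acyclic solos terms. -/
theorem stmt13 (P Q : CTerm) (hP : Acyclic P) (h : Reduces P Q) : Acyclic Q := by
  classical
  open Stmt13Aux in
  obtain ⟨s0, t0, σ, hs0, ht0, hdual, hm, hQs, hQb⟩ := h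
  obtain ⟨hA1, hA2, hA3, hA4, hA5⟩ := hP
  set R : Multiset Solo := (P.solos.erase s0).erase t0 with hR
  have ht0P : t0 ∈ P.solos := Multiset.mem_of_mem_erase ht0
  have hRle : R ≤ P.solos := le_trans (Multiset.erase_le _ _) (Multiset.erase_le _ _)
  have hmemP : ∀ u ∈ R, u ∈ P.solos := fun u hu => Multiset.subset_of_le hRle hu
  obtain ⟨roots0, roott0⟩ := hA2 s0 hs0 t0 ht0P hdual
  -- Key lemma C: names with an R-occurrence in a residue do not occur in
  -- s0/t0, are fixed by σ, and have no other σ-preimage.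
  have keyC : ∀ u ∈ R, ∀ x : ℕ, u.hasR x →
      ¬ Occ s0 t0 x ∧ σ x = x ∧ ∀ z, σ z = x → z = x := by
    intro u hu x hx
    have huP : u ∈ P.solos := hmemP u hu
    have hnocc : ¬ Occ s0 t0 x := by
      rintro (hocc | hocc)
      · have hchain := hA3 u huP s0 hs0 x hx hocc
        rcases Relation.ReflTransGen.cases_tail hchain with heq | ⟨c, _, hc⟩
        · -- u = s0 as a value: two copies of an R-occurrence of x
          have hle : s0 ::ₘ (u ::ₘ 0) ≤ P.solos := by
            rw [← Multiset.cons_erase hs0]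
            exact Multiset.cons_le_cons s0
              (Multiset.singleton_le.mpr (Multiset.mem_of_mem_erase hu))
          exact two_copies hle (heq ▸ hx) hx hA1
        · exact roots0 c hc.1 hc.2.2
      · have hchain := hA3 u huP t0 ht0P x hx hocc
        rcases Relation.ReflTransGen.cases_tail hchain with heq | ⟨c, _, hc⟩
        · have hle : t0 ::ₘ (u ::ₘ 0) ≤ P.solos := by
            refine le_trans ?_ (Multiset.erase_le s0 P.solos)
            rw [← Multiset.cons_erase ht0]
            exact Multiset.cons_le_cons t0 (Multiset.singleton_le.mpr hu)
          exact two_copies hle (heq ▸ hx) hx hA1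
        · exact roott0 c hc.1 hc.2.2
    have hfix : σ x = x := by
      by_contra hne
      exact hnocc (sigma_occ hm hne).1
    refine ⟨hnocc, hfix, fun z hz => ?_⟩
    by_contra hne
    have hzz : σ z ≠ z := by rw [hz]; exact fun h => hne h.symm
    exact hnocc (hz ▸ (sigma_occ hm hzz).2)
  -- R-occurrences are preserved exactly by applySub σ on residues
  have mapR : ∀ u ∈ R, ∀ i (x : ℕ),
      (applySub σ u).objs i = (x, Proto.R) ↔ u.objs i = (x, Proto.R) := by
    intro u hu i x
    constructor
    · intro hi
      have h2 : (u.objs i).2 = Proto.R := congrArg Prod.snd hi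
      have hobj : u.objs i = ((u.objs i).1, Proto.R) := by
        rw [← h2]
      have hR' : u.hasR (u.objs i).1 := ⟨i, hobj⟩
      have hfix := (keyC u hu _ hR').2.1
      have h1 : σ (u.objs i).1 = x := congrArg Prod.fst hi
      rw [hfix] at h1
      rw [hobj, h1]
    · intro hi
      have hfix := (keyC u hu x ⟨i, hi⟩).2.1
      show (σ (u.objs i).1, (u.objs i).2) = (x, Proto.R)
      rw [hi]
      simp [hfix]
  have hasR_iff : ∀ u ∈ R, ∀ x : ℕ, (applySub σ u).hasR x ↔ u.hasR x := by
    intro u hu x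
    constructor
    · rintro ⟨i, hi⟩; exact ⟨i, (mapR u hu i x).mp hi⟩
    · rintro ⟨i, hi⟩; exact ⟨i, (mapR u hu i x).mpr hi⟩
  -- AC1
  have hQ1 : AC1 Q := by
    intro x
    have hcong : Q.solos.map
        (fun s => (Finset.univ.filter (fun i => s.objs i = (x, Proto.R))).card)
        = R.map
        (fun s => (Finset.univ.filter (fun i => s.objs i = (x, Proto.R))).card) := by
      rw [hQs, Multiset.map_map]
      refine Multiset.map_congr rfl ?_
      intro u hu
      simp only [Function.comp_apply]
      congr 1
      refine Finset.filter_congr ?_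
      intro i _
      exact ⟨fun h => (mapR u hu i x).mp h, fun h => (mapR u hu i x).mpr h⟩
    obtain ⟨D, hD⟩ := Multiset.le_iff_exists_add.mp hRle
    have hle : Q.Rocc x ≤ P.Rocc x := by
      unfold CTerm.Rocc
      rw [hcong, hD, Multiset.map_add, Multiset.sum_add]
      exact Nat.le_add_right _ _
    exact le_trans hle (hA1 x)
  -- AC2
  have hroot : ∀ s' ∈ Q.solos, ∀ t' ∈ Q.solos, Dual s' t' → Q.IsRoot s' := by
    intro s' hs' t' ht' hd w' hw' hlt
    rw [hQs] at hs' ht' hw'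
    obtain ⟨u, hu, rfl⟩ := Multiset.mem_map.mp hs'
    obtain ⟨v, hv, rfl⟩ := Multiset.mem_map.mp ht'
    obtain ⟨w, hw, rfl⟩ := Multiset.mem_map.mp hw'
    -- hlt : (applySub σ w).hasR (applySub σ u).subj
    obtain ⟨i, hi⟩ := hlt
    have h2 : (w.objs i).2 = Proto.R := congrArg Prod.snd hi
    have hobj : w.objs i = ((w.objs i).1, Proto.R) := by rw [← h2]
    set y := (w.objs i).1 with hy
    have hwR : w.hasR y := ⟨i, hobj⟩
    obtain ⟨_, hfixy, hpre⟩ := keyC w hw y hwR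
    have h1 : σ y = (applySub σ u).subj := congrArg Prod.fst hi
    have hus : σ u.subj = y := by
      have : σ u.subj = σ y := h1.symm.trans rfl |>.symm ▸ rfl
      · rw [hfixy] at h1; exact h1.symm
    have huy : u.subj = y := hpre u.subj hus
    have hvy : v.subj = y := by
      have hds : σ u.subj = σ v.subj := hd.1
      rw [hus] at hds
      exact hpre v.subj hds.symm
    have hdPuv : Dual u v := ⟨huy.trans hvy.symm, hd.2⟩
    obtain ⟨hru, _⟩ := hA2 u (hmemP u hu) v (hmemP v hv) hdPuv
    exact hru w (hmemP w hw) (show w.hasR u.subj by rw [huy]; exact hwR)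
  have hQ2 : AC2 Q := by
    intro s' hs' t' ht' hd
    exact ⟨hroot s' hs' t' ht' hd, hroot t' ht' s' hs' ⟨hd.1.symm, hd.2.symm⟩⟩
  -- chain transfer for AC3
  have transfer : ∀ u v : Solo, Relation.ReflTransGen P.lt u v → u ∈ R →
      v ∈ R ∧ Relation.ReflTransGen Q.lt (applySub σ u) (applySub σ v) := by
    intro u v hchain hu
    induction hchain with
    | refl => exact ⟨hu, Relation.ReflTransGen.refl⟩
    | @tail c v hsteps hstep ih =>
        obtain ⟨hcR, hQchain⟩ := ih
        obtain ⟨hcP, hvP, hcv⟩ := hstep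
        have hvs0 : v ≠ s0 := fun h => roots0 c hcP (h ▸ hcv)
        have hvt0 : v ≠ t0 := fun h => roott0 c hcP (h ▸ hcv)
        have hvR : v ∈ R := by
          rw [hR]
          exact (Multiset.mem_erase_of_ne hvt0).mpr
            ((Multiset.mem_erase_of_ne hvs0).mpr hvP)
        refine ⟨hvR, hQchain.tail ?_⟩
        refine ⟨?_, ?_, ?_⟩
        · rw [hQs]; exact Multiset.mem_map_of_mem _ hcR
        · rw [hQs]; exact Multiset.mem_map_of_mem _ hvR
        · -- (applySub σ c).hasR (applySub σ v).subj
          obtain ⟨i, hi⟩ := hcv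
          have hfix := (keyC c hcR v.subj ⟨i, hi⟩).2.1
          refine ⟨i, ?_⟩
          show (σ (c.objs i).1, (c.objs i).2) = ((applySub σ v).subj, Proto.R)
          rw [hi]
          show (σ v.subj, Proto.R) = (σ v.subj, Proto.R)
          rfl
  have hQ3 : AC3 Q := by
    intro s' hs' t' ht' x hRx hOx
    rw [hQs] at hs' ht'
    obtain ⟨u, hu, rfl⟩ := Multiset.mem_map.mp hs'
    obtain ⟨v, hv, rfl⟩ := Multiset.mem_map.mp ht'
    have huR : u.hasR x := (hasR_iff u hu x).mp hRx
    obtain ⟨_, _, hpre⟩ := keyC u hu x huR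
    have hvO : v.objOcc x := by
      obtain ⟨i, hi⟩ := hOx
      exact ⟨i, hpre _ hi⟩
    have hchain := hA3 u (hmemP u hu) v (hmemP v hv) x huR hvO
    exact (transfer u v hchain hu).2
  -- AC4
  have hQ4 : AC4 Q := by
    intro s' hs' x hS hRx
    rw [hQs] at hs'
    obtain ⟨u, hu, rfl⟩ := Multiset.mem_map.mp hs'
    have huR : u.hasR x := (hasR_iff u hu x).mp hRx
    obtain ⟨_, _, hpre⟩ := keyC u hu x huR
    have huS : u.hasS x := by
      obtain ⟨j, hj⟩ := hS
      have h2 : (u.objs j).2 = Proto.S := congrArg Prod.snd hj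
      have h1 : σ (u.objs j).1 = x := congrArg Prod.fst hj
      have := hpre _ h1
      exact ⟨j, by rw [← this, ← h2]⟩
    exact hA4 u (hmemP u hu) x huS huR
  -- AC5
  have hQ5 : AC5 Q := by
    intro x hx s' hs' hRx
    rw [hQs] at hs'
    obtain ⟨u, hu, rfl⟩ := Multiset.mem_map.mp hs'
    have huR : u.hasR x := (hasR_iff u hu x).mp hRx
    obtain ⟨_, hfix, _⟩ := keyC u hu x huR
    have hxP : x ∈ P.bound := by
      by_contra hxnP
      exact hA5 x hxnP u (hmemP u hu) huR
    apply hx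
    rw [hQb]
    exact Finset.mem_filter.mpr ⟨hxP, hfix⟩
  exact ⟨hQ1, hQ2, hQ3, hQ4, hQ5⟩
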